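/- arXiv:0909.0598 — 5 statements merged into one kernel-verified Lean document; each statement's English description precedes it below -/
import Mathlib

section
/- Let F = GF(2^m) with m ≥ 2 and let R be the set of polynomials in F of degree at most m−2. Then the sets (x+1)·R and (x^{m-1}+x+1) + (x+1)·R are disjoint and their union is GF(2^m). -/
/-!
Every element of `AdjoinRoot p`, with `deg p = m`, is `mk p f` for a unique `f` of degree `< m`,
and such an `f` splits as `f = f(a) + (X - a) q` with `deg q ≤ m - 2`. Hence the translates
`c + (root p - a) · R` (with `deg c < m`) are disjoint for distinct values `c(a)` and cover the
whole ring as `c(a)` runs over the field. Over `ZMod 2` with `a = 1` the two values `0` and `1`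
are taken by `0` and `X ^ (m - 1) + X + 1`.
-/

open Polynomial

theorem Polynomial.exists_eq_add_X_sub_C_mul {R : Type*} [CommRing R] [Nontrivial R]
    {f c : R[X]} {a : R} {n : ℕ} (hf : f.natDegree ≤ n + 1) (hc : c.natDegree ≤ n + 1)
    (h : f.eval a = c.eval a) : ∃ q : R[X], q.natDegree ≤ n ∧ f = c + (X - C a) * q := by
  refine ⟨(f - c) /ₘ (X - C a), ?_, ?_⟩
  · rw [natDegree_divByMonic _ (monic_X_sub_C a), natDegree_X_sub_C]
    have := natDegree_sub_le f c
    omega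
  · rw [mul_divByMonic_eq_iff_isRoot.2 (by simp [h]), add_sub_cancel]

theorem Polynomial.natDegree_add_X_sub_C_mul_lt {R : Type*} [CommRing R] {c q : R[X]} {a : R}
    {m : ℕ} (hm : 2 ≤ m) (hc : c.natDegree < m) (hq : q.natDegree ≤ m - 2) :
    (c + (X - C a) * q).natDegree < m := by
  have := natDegree_mul_le (p := X - C a) (q := q)
  have := natDegree_X_sub_C_le (r := a)
  exact (natDegree_add_le _ _).trans_lt (max_lt hc (by omega))

namespace AdjoinRoot

variable {K : Type*} [Field K] {p : K[X]}

theorem eq_of_mk_eq_of_natDegree_lt {f g : K[X]} (h : mk p f = mk p g)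
    (hf : f.natDegree < p.natDegree) (hg : g.natDegree < p.natDegree) : f = g :=
  sub_eq_zero.1 <| eq_zero_of_dvd_of_natDegree_lt (mk_eq_mk.1 h)
    ((natDegree_sub_le f g).trans_lt (max_lt hf hg))

theorem exists_natDegree_lt_mk_eq (hp : p.natDegree ≠ 0) (y : AdjoinRoot p) :
    ∃ f : K[X], f.natDegree < p.natDegree ∧ mk p f = y := by
  obtain ⟨g, rfl⟩ := mk_surjective y
  refine ⟨g % p, natDegree_mod_lt g hp, mk_eq_mk.2 ?_⟩
  rw [EuclideanDomain.mod_eq_sub_mul_div, sub_sub_cancel_left, dvd_neg]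
  exact dvd_mul_right _ _

variable (hp : 2 ≤ p.natDegree) {a : K}
include hp

theorem eval_eq_of_mk_add_mul_eq {c₁ c₂ q₁ q₂ : K[X]}
    (hc₁ : c₁.natDegree < p.natDegree) (hc₂ : c₂.natDegree < p.natDegree)
    (hq₁ : q₁.natDegree ≤ p.natDegree - 2) (hq₂ : q₂.natDegree ≤ p.natDegree - 2)
    (h : mk p c₁ + mk p (X - C a) * mk p q₁ = mk p c₂ + mk p (X - C a) * mk p q₂) :
    c₁.eval a = c₂.eval a := by
  have := eq_of_mk_eq_of_natDegree_lt (by simpa only [map_add, map_mul] using h)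
    (natDegree_add_X_sub_C_mul_lt hp hc₁ hq₁) (natDegree_add_X_sub_C_mul_lt hp hc₂ hq₂)
  simpa using congrArg (eval a) this

theorem exists_mk_add_mul_eq {c f : K[X]}
    (hc : c.natDegree < p.natDegree) (hf : f.natDegree < p.natDegree) (h : f.eval a = c.eval a) :
    ∃ q : K[X], q.natDegree ≤ p.natDegree - 2 ∧
      mk p c + mk p (X - C a) * mk p q = mk p f := by
  obtain ⟨q, hq, rfl⟩ :=
    exists_eq_add_X_sub_C_mul (n := p.natDegree - 2) (by omega) (by omega) h
  exact ⟨q, hq, by simp⟩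

end AdjoinRoot

open AdjoinRoot in
theorem stmt2_general (m : ℕ) (hm : 2 ≤ m) (p : Polynomial (ZMod 2))
    (hdeg : p.natDegree = m) :
    Disjoint
      ((fun r => (AdjoinRoot.root p + 1) * r) ''
        ((AdjoinRoot.mk p) '' {q : Polynomial (ZMod 2) | q.natDegree ≤ m - 2}))
      ((fun r => ((AdjoinRoot.root p) ^ (m - 1) + AdjoinRoot.root p + 1)
          + (AdjoinRoot.root p + 1) * r) ''
        ((AdjoinRoot.mk p) '' {q : Polynomial (ZMod 2) | q.natDegree ≤ m - 2}))
    ∧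
    ((fun r => (AdjoinRoot.root p + 1) * r) ''
        ((AdjoinRoot.mk p) '' {q : Polynomial (ZMod 2) | q.natDegree ≤ m - 2}))
      ∪
      ((fun r => ((AdjoinRoot.root p) ^ (m - 1) + AdjoinRoot.root p + 1)
          + (AdjoinRoot.root p + 1) * r) ''
        ((AdjoinRoot.mk p) '' {q : Polynomial (ZMod 2) | q.natDegree ≤ m - 2}))
      = Set.univ := by
  subst hdeg
  have hX : mk p (X - C 1) = root p + 1 := by
    rw [sub_eq_add_neg, ← C_neg, show (-1 : ZMod 2) = 1 by decide]
    simp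
  set c : (ZMod 2)[X] := X ^ (p.natDegree - 1) + X + 1
  have hroot : mk p c = root p ^ (p.natDegree - 1) + root p + 1 := by simp [c]
  have hc : c.natDegree < p.natDegree := by
    have : c.natDegree ≤ p.natDegree - 1 := by
      simp only [c]
      compute_degree
      omega
    omega
  have hc1 : c.eval 1 = 1 := by
    simp only [c, eval_add, eval_pow, eval_X, one_pow, eval_one]
    decide
  rw [← hX, ← hroot]
  constructor
  · rw [Set.disjoint_left]
    rintro _ ⟨_, ⟨q₁, hq₁, rfl⟩, rfl⟩ ⟨_, ⟨q₂, hq₂, rfl⟩, h⟩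
    have := eval_eq_of_mk_add_mul_eq hm (c₁ := 0) (by rw [natDegree_zero]; omega) hc hq₁ hq₂
      (by rw [map_zero, zero_add]; exact h.symm)
    simp [hc1] at this
  · refine Set.eq_univ_of_forall fun y => ?_
    obtain ⟨f, hf, rfl⟩ := exists_natDegree_lt_mk_eq (by omega) y
    rcases (by decide : ∀ x : ZMod 2, x = 0 ∨ x = 1) (f.eval 1) with h | h
    · obtain ⟨q, hq, hfq⟩ :=
        exists_mk_add_mul_eq hm (c := 0) (by rw [natDegree_zero]; omega) hf (by simpa using h)
      exact Or.inl ⟨_, ⟨q, hq, rfl⟩, by simpa using hfq⟩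
    · obtain ⟨q, hq, hfq⟩ := exists_mk_add_mul_eq hm hc hf (h.trans hc1.symm)
      exact Or.inr ⟨_, ⟨q, hq, rfl⟩, hfq⟩

/-- In F = GF(2^m) (m ≥ 2), with R the polynomials of degree at most m−2,
the sets (x+1)·R and (x^{m-1}+x+1) + (x+1)·R are disjoint and their union is F. -/
theorem stmt2 (m : ℕ) (hm : 2 ≤ m) (p : Polynomial (ZMod 2)) (hp : Irreducible p)
    (hdeg : p.natDegree = m) :
    Disjoint
      ((fun r => (AdjoinRoot.root p + 1) * r) ''
        ((AdjoinRoot.mk p) '' {q : Polynomial (ZMod 2) | q.natDegree ≤ m - 2}))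
      ((fun r => ((AdjoinRoot.root p) ^ (m - 1) + AdjoinRoot.root p + 1)
          + (AdjoinRoot.root p + 1) * r) ''
        ((AdjoinRoot.mk p) '' {q : Polynomial (ZMod 2) | q.natDegree ≤ m - 2}))
    ∧
    ((fun r => (AdjoinRoot.root p + 1) * r) ''
        ((AdjoinRoot.mk p) '' {q : Polynomial (ZMod 2) | q.natDegree ≤ m - 2}))
      ∪
      ((fun r => ((AdjoinRoot.root p) ^ (m - 1) + AdjoinRoot.root p + 1)
          + (AdjoinRoot.root p + 1) * r) ''
        ((AdjoinRoot.mk p) '' {q : Polynomial (ZMod 2) | q.natDegree ≤ m - 2}))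
      = Set.univ :=
  stmt2_general m hm p hdeg
end

section
/- Let s₁, s₂ be positive integers with s₂ dividing s₁. Let A be an orthogonal array OA(n, m, s₁) of strength 2, and let π be any map from the s₁ symbols onto s₂ symbols such that each fiber π⁻¹(b) has exactly s₁/s₂ elements. Then the matrix π(A), obtained by applying π entrywise, is an orthogonal array OA(n, m, s₂) of strength 2. -/
/-- An orthogonal array of strength 2. -/
def IsOA {I J S : Type*} [Fintype I] [Fintype S] [DecidableEq S]
    (M : I → J → S) : Prop :=
  ∀ j k : J, j ≠ k → ∀ a b : S,
    (Finset.univ.filter (fun i => M i j = a ∧ M i k = b)).card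
      = Fintype.card I / (Fintype.card S) ^ 2

/-! A row of `π ∘ A` shows the pair `(a, b)` in columns `j, k` exactly when the row of `A`
shows one of the `|π⁻¹ a| · |π⁻¹ b| = (s₁/s₂)²` pairs lying over it, each of which occurs
`n / s₁²` times. Counting all rows gives `s₁² ∣ n`, and counting all symbols gives
`s₁ = s₂ · (s₁/s₂)`, so `(s₁/s₂)² · (n / s₁²) = n / s₂²`. -/

open Finset

theorem Fintype.card_eq_card_mul_of_card_fiber_eq {α β : Type*} [Fintype α] [Fintype β]
    [DecidableEq β] (f : α → β) {d : ℕ} (h : ∀ b, #{a | f a = b} = d) :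
    Fintype.card α = Fintype.card β * d := by
  rw [← card_univ, card_eq_sum_card_fiberwise (f := f) (t := univ) (by simp),
    sum_const_nat fun b _ => h b, card_univ]

namespace IsOA

variable {I J S : Type*} [Fintype I] [Fintype S] [DecidableEq S] {M : I → J → S}

theorem card_filter_pair_eq (hM : IsOA M) {j k : J} (hjk : j ≠ k) (p : S × S) :
    #{i | (M i j, M i k) = p} = Fintype.card I / Fintype.card S ^ 2 := by
  simpa only [Prod.ext_iff] using hM j k hjk p.1 p.2

theorem sq_card_dvd (hM : IsOA M) {j k : J} (hjk : j ≠ k) :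
    Fintype.card S ^ 2 ∣ Fintype.card I := by
  have hrows := card_eq_sum_card_fiberwise (s := univ) (t := univ)
    (f := fun i => (M i j, M i k)) (by simp)
  rw [sum_const_nat fun p _ => hM.card_filter_pair_eq hjk p, card_univ, card_univ,
    Fintype.card_prod, ← sq] at hrows
  exact ⟨_, hrows⟩

theorem card_filter_comp {T : Type*} [DecidableEq T] (hM : IsOA M) {j k : J} (hjk : j ≠ k)
    (π : S → T) (a b : T) :
    #{i | π (M i j) = a ∧ π (M i k) = b}
      = #{x | π x = a} * #{x | π x = b} * (Fintype.card I / Fintype.card S ^ 2) := by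
  calc #{i | π (M i j) = a ∧ π (M i k) = b}
      = #{i | (M i j, M i k) ∈ univ.filter (π · = a) ×ˢ univ.filter (π · = b)} := by
        simp only [mem_product, mem_filter, mem_univ, true_and]
    _ = ∑ p ∈ univ.filter (π · = a) ×ˢ univ.filter (π · = b), #{i | (M i j, M i k) = p} :=
        (sum_card_fiberwise_eq_card_filter _ _ _).symm
    _ = _ := by
        rw [sum_const_nat fun p _ => hM.card_filter_pair_eq hjk p, card_product]

end IsOA

theorem stmt6_general {S₁ S₂ : Type*} [Fintype S₁] [Fintype S₂] [DecidableEq S₁] [DecidableEq S₂]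
    (π : S₁ → S₂)
    (hπ : ∀ b : S₂, (Finset.univ.filter (fun a : S₁ => π a = b)).card
        = Fintype.card S₁ / Fintype.card S₂)
    {n m : ℕ} (A : Fin n → Fin m → S₁) (hA : IsOA A) :
    IsOA (fun i j => π (A i j)) := by
  intro j k hjk a b
  obtain ⟨q, hq⟩ := hA.sq_card_dvd hjk
  have hs₁ := Fintype.card_eq_card_mul_of_card_fiber_eq π hπ
  have hs₂ : 0 < Fintype.card S₂ := Fintype.card_pos_iff.mpr ⟨a⟩
  rw [hA.card_filter_comp hjk, hπ a, hπ b, hq]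
  set d := Fintype.card S₁ / Fintype.card S₂
  rw [hs₁, mul_pow]
  rcases Nat.eq_zero_or_pos d with hd | hd
  · simp [hd]
  rw [Nat.mul_div_cancel_left _ (by positivity), mul_assoc (_ ^ 2),
    Nat.mul_div_cancel_left _ (by positivity)]
  ring

/-- Addelman–Kempthorne level collapsing: if π maps the s₁ symbols
onto s₂ symbols (s₂ ∣ s₁) with all fibers of size s₁/s₂, then applying π entrywise
to an OA(n,m,s₁) yields an OA(n,m,s₂). -/
theorem stmt6 {S₁ S₂ : Type*} [Fintype S₁] [Fintype S₂] [DecidableEq S₁] [DecidableEq S₂]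
    (hdvd : Fintype.card S₂ ∣ Fintype.card S₁) (π : S₁ → S₂)
    (hπ : ∀ b : S₂, (Finset.univ.filter (fun a : S₁ => π a = b)).card
        = Fintype.card S₁ / Fintype.card S₂)
    {n m : ℕ} (A : Fin n → Fin m → S₁) (hA : IsOA A) :
    IsOA (fun i j => π (A i j)) :=
  stmt6_general π hπ A hA
end

section
/- Let s₁, s₂ ≥ 1 be integers with s₂ | s₁. Let A₁ be the s₁² × 3 matrix over Z_{s₁} whose rows are all triples (i, j, −(i+j) mod s₁) for i, j ∈ {0,…,s₁−1}. Then (i) A₁ is an orthogonal array OA(s₁², 3, s₁) of strength 2; (ii) the submatrix A₂ of A₁ consisting of the rows with 0 ≤ i, j ≤ s₂−1, after reducing all entries modulo s₂, is an orthogonal array OA(s₂², 3, s₂) of strength 2. -/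
open Function

theorem IsOA.of_bijective {I J S : Type*} [Fintype I] [Fintype S] [DecidableEq S]
    (M : I → J → S) (hM : ∀ j k : J, j ≠ k → Bijective fun i => (M i j, M i k)) :
    IsOA M := by
  intro j k hjk a b
  have hcard : Fintype.card I = Fintype.card S ^ 2 := by
    rw [Fintype.card_congr (Equiv.ofBijective _ (hM j k hjk)), Fintype.card_prod, sq]
  obtain ⟨i, hi⟩ := (hM j k hjk).2 (a, b)
  have hS : 0 < Fintype.card S := Fintype.card_pos_iff.2 ⟨a⟩
  rw [hcard, Nat.div_self (pow_pos hS 2), Finset.card_eq_one]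
  refine ⟨i, Finset.ext fun i' => ?_⟩
  simp only [Finset.mem_filter, Finset.mem_univ, true_and, Finset.mem_singleton]
  rw [← Prod.mk.injEq, ← hi]
  exact (hM j k hjk).1.eq_iff

def zeroSumArray (G : Type*) [AddCommGroup G] (p : G × G) : Fin 3 → G :=
  ![p.1, p.2, -(p.1 + p.2)]

theorem zeroSumArray_pair_injective (G : Type*) [AddCommGroup G] {j k : Fin 3} (hjk : j ≠ k) :
    Injective fun p => (zeroSumArray G p j, zeroSumArray G p k) := by
  rintro ⟨x, y⟩ ⟨x', y'⟩ h
  fin_cases j <;> fin_cases k <;>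
    simp_all [zeroSumArray, Prod.ext_iff] <;> grind

theorem isOA_zeroSumArray (G : Type*) [AddCommGroup G] [Fintype G] [DecidableEq G] :
    IsOA (zeroSumArray G) :=
  IsOA.of_bijective _ fun _ _ hjk =>
    Finite.injective_iff_bijective.1 (zeroSumArray_pair_injective G hjk)

/-- zero-sum array: for s₂ ∣ s₁, the s₁² × 3 array over Z_{s₁} with
rows (i, j, −(i+j)) is an OA(s₁², 3, s₁); and the subarray of rows with
i, j ∈ {0,…,s₂−1}, reduced modulo s₂, is an OA(s₂², 3, s₂). -/
theorem stmt9 (s₁ s₂ : ℕ) [NeZero s₁] [NeZero s₂] (hdvd : s₂ ∣ s₁) :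
    IsOA (fun (p : ZMod s₁ × ZMod s₁) (k : Fin 3) => ![p.1, p.2, -(p.1 + p.2)] k)
    ∧
    IsOA (fun (q : ZMod s₂ × ZMod s₂) (k : Fin 3) =>
      ZMod.castHom hdvd (ZMod s₂)
        (![((q.1.val : ZMod s₁)), ((q.2.val : ZMod s₁)),
            -(((q.1.val : ZMod s₁)) + ((q.2.val : ZMod s₁)))] k)) := by
  refine ⟨isOA_zeroSumArray (ZMod s₁), ?_⟩
  have hlift (x : ZMod s₂) : ZMod.castHom hdvd (ZMod s₂) (x.val : ZMod s₁) = x := by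
    rw [map_natCast, ZMod.natCast_zmod_val]
  convert isOA_zeroSumArray (ZMod s₂) using 1
  funext q k
  fin_cases k <;>
    simp only [zeroSumArray, Fin.reduceFinMk, Matrix.cons_val, map_neg, map_add, hlift]
end

section
/- Let m ≥ 2, F = GF(2^{m+1}) with irreducible polynomial x^{m+1}+x+1, and let R be the set of polynomials over GF(2) of degree at most m−2. Let D₁ be the 2^{m+1} × 4 matrix with rows indexed by elements f ∈ F and columns indexed by {0, 1, x, x+1}, with entry f·g in row f, column g. Then (i) D₁ is a difference matrix D(2^{m+1}, 4, 2^{m+1}) over F; (ii) let D₂ be the 2^m-row submatrix of D₁ with row indices in R ∪ (x^m + x^{m-1} + R), and let φ : F → GF(2^m) be the truncation map sending a₀+a₁x+⋯+a_m x^m to a₀+a₁x+⋯+a_{m-1}x^{m-1}; then φ(D₂) is a difference matrix D(2^m, 4, 2^m) over GF(2^m). -/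
/-!
Write `d = g - g'`; it is `1`, `X` or `X + 1`, and each of these is coprime to
`p = X ^ (m + 1) + X + 1` because `p(0) = p(1) = 1`. Hence `f ↦ f d mod p` is a bijection of `F`,
which is part (i).

For part (ii), `ψ f = φ (f d mod p)` is additive and is just `f ↦ f d` on `R`, so `ψ(R) = d R`.
This is the kernel, inside the polynomials of degree `< m`, of a parity check `χ`: the coefficient
of `X ^ (m - 1)` for `d = 1`, evaluation at `0` for `d = X` and at `1` for `d = X + 1`. As
`χ (ψ (X ^ m + X ^ (m - 1))) = 1`, the translate `X ^ m + X ^ (m - 1) + R` is mapped onto the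
other coset.
-/

open Polynomial

theorem AddMonoidHom.existsUnique_mem_or_mem_add_apply_eq {M N : Type*} [AddMonoid M]
    [AddCommGroup N] (ψ : M →+ N) (χ : N →+ ZMod 2) (T : AddSubgroup N) (A : Set M) (e : M)
    (hA : ∀ r ∈ A, ψ r ∈ T ∧ χ (ψ r) = 0)
    (hAT : ∀ h ∈ T, χ h = 0 → ∃! r, r ∈ A ∧ ψ r = h)
    (he : ψ e ∈ T) (hχe : χ (ψ e) = 1) {h : N} (hh : h ∈ T) :
    ∃! f, (f ∈ A ∨ ∃ r, r ∈ A ∧ f = e + r) ∧ ψ f = h := by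
  have hχ_add : ∀ r ∈ A, χ (ψ (e + r)) = 1 := fun r hr => by simp [hχe, (hA r hr).2]
  rcases (by decide : ∀ c : ZMod 2, c = 0 ∨ c = 1) (χ h) with h0 | h1
  · obtain ⟨r, ⟨hr, rfl⟩, huniq⟩ := hAT h hh h0
    refine ⟨r, ⟨Or.inl hr, rfl⟩, ?_⟩
    rintro f ⟨hf | ⟨r', hr', rfl⟩, hψf⟩
    · exact huniq f ⟨hf, hψf⟩
    · simpa [hψf, h0] using hχ_add r' hr'
  · obtain ⟨r, ⟨hr, hψr⟩, huniq⟩ :=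
      hAT (h - ψ e) (T.sub_mem hh he) (by simp [h1, hχe])
    refine ⟨e + r, ⟨Or.inr ⟨r, hr, rfl⟩, by simp [hψr]⟩, ?_⟩
    rintro f ⟨hf | ⟨r', hr', rfl⟩, hψf⟩
    · simp [← hψf, (hA f hf).2] at h1
    · rw [huniq r' ⟨hr', by simp [← hψf]⟩]

namespace Polynomial

variable {R : Type*} [CommRing R]

theorem modByMonic_eq_of_dvd_sub_of_natDegree_lt [Nontrivial R] {a b q : R[X]}
    (hq : q.Monic) (hdvd : q ∣ a - b) (hb : b.natDegree < q.natDegree) : a %ₘ q = b :=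
  (modByMonic_eq_of_dvd_sub hq hdvd).trans
    ((modByMonic_eq_self_iff hq).mpr (degree_lt_degree hb))

theorem existsUnique_mul_modByMonic_eq [Nontrivial R] {p d h : R[X]} {n : ℕ} (hp : p.Monic)
    (hpn : p.natDegree = n + 1) (hdp : IsCoprime d p) (hh : h.natDegree ≤ n) :
    ∃! f : R[X], f.natDegree ≤ n ∧ (f * d) %ₘ p = h := by
  obtain ⟨a, b, hab⟩ := hdp
  have hp1 : p ≠ 1 := fun h1 => by simp [h1] at hpn
  have hlt := natDegree_modByMonic_lt (h * a) hp hp1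
  refine ⟨(h * a) %ₘ p, ⟨by omega, ?_⟩, ?_⟩
  · refine modByMonic_eq_of_dvd_sub_of_natDegree_lt hp ⟨-(h * b) - (h * a /ₘ p) * d, ?_⟩
      (by omega)
    linear_combination d * modByMonic_eq_sub_mul_div (h * a) p + h * hab
  · rintro f ⟨hf, rfl⟩
    refine (modByMonic_eq_of_dvd_sub_of_natDegree_lt hp
      ⟨-(a * (f * d /ₘ p)) - f * b, ?_⟩ (by omega)).symm
    linear_combination a * modByMonic_eq_sub_mul_div (f * d) p + f * hab

theorem isCoprime_X_sub_C_of_not_isRoot {K : Type*} [Field K] {a : K} {p : K[X]}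
    (ha : ¬ p.IsRoot a) : IsCoprime (X - C a) p :=
  (irreducible_X_sub_C a).coprime_iff_not_dvd.mpr (dvd_iff_isRoot.not.mpr ha)

theorem existsUnique_mul_X_sub_C_eq [Nontrivial R] {a : R} {h : R[X]} {n : ℕ}
    (hh : h.natDegree ≤ n + 1) (ha : h.IsRoot a) :
    ∃! r : R[X], r.natDegree ≤ n ∧ r * (X - C a) = h := by
  refine ⟨h /ₘ (X - C a), ⟨?_, ?_⟩, fun r ⟨_, hr⟩ => ?_⟩
  · rw [natDegree_divByMonic _ (monic_X_sub_C a), natDegree_X_sub_C]; omega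
  · rw [mul_comm]; exact mul_divByMonic_eq_iff_isRoot.mpr ha
  · rw [← hr, mul_comm, mul_divByMonic_cancel_left _ (monic_X_sub_C a)]

/-- The paper's `f ↦ φ(f d)` on `F = R[X]/(p)`, with `φ` the truncation to degree `< m`. -/
noncomputable def truncMulMod (p d : R[X]) (m : ℕ) : R[X] →+ R[X] :=
  ((modByMonicHom (X ^ m)).comp ((modByMonicHom p).comp (LinearMap.mulRight R d))).toAddMonoidHom

theorem truncMulMod_apply (p d f : R[X]) (m : ℕ) :
    truncMulMod p d m f = f * d %ₘ p %ₘ X ^ m :=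
  rfl

theorem truncMulMod_eq_of_dvd_sub [Nontrivial R] {p d f b c : R[X]} {m : ℕ} (hp : p.Monic)
    (hpb : p ∣ f * d - b) (hb : b.natDegree < p.natDegree) (hbc : X ^ m ∣ b - c)
    (hc : c.natDegree < m) : truncMulMod p d m f = c := by
  rw [truncMulMod_apply, modByMonic_eq_of_dvd_sub_of_natDegree_lt hp hpb hb,
    modByMonic_eq_of_dvd_sub_of_natDegree_lt (monic_X_pow m) hbc (by simpa using hc)]

theorem truncMulMod_eq_mul [Nontrivial R] {p d f : R[X]} {m : ℕ} (hp : p.Monic)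
    (hm : m ≤ p.natDegree) (hf : (f * d).natDegree < m) : truncMulMod p d m f = f * d :=
  truncMulMod_eq_of_dvd_sub (b := f * d) hp (by simp) (by omega) (by simp) hf

theorem natDegree_truncMulMod_lt [Nontrivial R] (p d f : R[X]) {m : ℕ} (hm : m ≠ 0) :
    (truncMulMod p d m f).natDegree < m := by
  have hX : (X ^ m : R[X]) ≠ 1 := fun h1 => hm (by simpa using congrArg natDegree h1)
  simpa [truncMulMod_apply] using natDegree_modByMonic_lt (f * d %ₘ p) (monic_X_pow m) hX

theorem existsUnique_truncMulMod_eq_of_parityCheck [Nontrivial R] {p d e h : R[X]} {k : ℕ}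
    (χ : R[X] →+ ZMod 2) (hp : p.Monic) (hpk : k + 2 ≤ p.natDegree) (hd : d.natDegree ≤ 1)
    (hχd : ∀ r : R[X], r.natDegree ≤ k → χ (r * d) = 0)
    (hdiv : ∀ h : R[X], h.natDegree ≤ k + 1 → χ h = 0 →
      ∃! r, r.natDegree ≤ k ∧ r * d = h)
    (he : χ (truncMulMod p d (k + 2) e) = 1) (hh : h.natDegree ≤ k + 1) :
    ∃! f, (f.natDegree ≤ k ∨ ∃ r, r.natDegree ≤ k ∧ f = e + r) ∧
      truncMulMod p d (k + 2) f = h := by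
  set T := (degreeLE R ↑(k + 1)).toAddSubgroup
  have hT : ∀ h, h ∈ T ↔ h.natDegree ≤ k + 1 := fun h => by
    rw [Submodule.mem_toAddSubgroup, mem_degreeLE, natDegree_le_iff_degree_le]
  have hmul : ∀ r : R[X], r.natDegree ≤ k → (r * d).natDegree ≤ k + 1 := fun r hr =>
    natDegree_mul_le.trans (by omega)
  have hψ : ∀ r : R[X], r.natDegree ≤ k → truncMulMod p d (k + 2) r = r * d := fun r hr =>
    truncMulMod_eq_mul hp hpk (by have := hmul r hr; omega)
  refine (truncMulMod p d (k + 2)).existsUnique_mem_or_mem_add_apply_eq χ T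
    {r | r.natDegree ≤ k} e (fun r hr => ?_) (fun h hh h0 => ?_) ?_ he ((hT h).mpr hh)
  · rw [hψ r hr, hT]
    exact ⟨hmul r hr, hχd r hr⟩
  · obtain ⟨r, ⟨hr, hrd⟩, huniq⟩ := hdiv h ((hT h).mp hh) h0
    exact ⟨r, ⟨hr, (hψ r hr).trans hrd⟩,
      fun r' ⟨hr', hr'd⟩ => huniq r' ⟨hr', (hψ r' hr').symm.trans hr'd⟩⟩
  · rw [hT]
    have := natDegree_truncMulMod_lt p d e (m := k + 2) (by omega)
    omega

end Polynomial

theorem sub_eq_one_or_X_or_X_add_one {g g' : (ZMod 2)[X]}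
    (hg : g ∈ ({0, 1, X, X + 1} : Set (ZMod 2)[X]))
    (hg' : g' ∈ ({0, 1, X, X + 1} : Set (ZMod 2)[X])) (hne : g ≠ g') :
    g - g' = 1 ∨ g - g' = X ∨ g - g' = X + 1 := by
  simp only [Set.mem_insert_iff, Set.mem_singleton_iff] at hg hg'
  rcases hg with rfl | rfl | rfl | rfl <;> rcases hg' with rfl | rfl | rfl | rfl <;> grind

theorem X_add_one_eq_X_sub_C_one : (X + 1 : (ZMod 2)[X]) = X - C 1 := by
  simp [CharTwo.sub_eq_add]

theorem isCoprime_X_pow_add_X_add_one {d : (ZMod 2)[X]} (hd : d = 1 ∨ d = X ∨ d = X + 1)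
    (n : ℕ) : IsCoprime d (X ^ (n + 1) + X + 1) := by
  rcases hd with rfl | rfl | rfl
  · exact isCoprime_one_left
  · simpa using isCoprime_X_sub_C_of_not_isRoot (a := (0 : ZMod 2)) (p := X ^ (n + 1) + X + 1)
      (by simp)
  · rw [X_add_one_eq_X_sub_C_one]
    refine isCoprime_X_sub_C_of_not_isRoot ?_
    simp only [IsRoot.def, eval_add, eval_pow, eval_X, one_pow, eval_one]
    decide

theorem existsUnique_truncMulMod_X_pow_add_X_add_one_eq (k : ℕ) {d h : (ZMod 2)[X]}
    (hd : d = 1 ∨ d = X ∨ d = X + 1) (hh : h.natDegree ≤ k + 1) :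
    ∃! f, (f.natDegree ≤ k ∨
        ∃ r, r.natDegree ≤ k ∧ f = X ^ (k + 2) + X ^ (k + 1) + r) ∧
      truncMulMod (X ^ (k + 3) + X + 1) d (k + 2) f = h := by
  have hp : (X ^ (k + 3) + X + 1 : (ZMod 2)[X]).Monic := by monicity!
  have hpn : (X ^ (k + 3) + X + 1 : (ZMod 2)[X]).natDegree = k + 3 := by compute_degree!
  rcases hd with rfl | rfl | rfl
  · refine existsUnique_truncMulMod_eq_of_parityCheck
      (lcoeff (ZMod 2) (k + 1)).toAddMonoidHom hp (by omega) (by simp) (fun r hr => ?_)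
      (fun h hh h0 => ?_) ?_ hh
    · simpa using coeff_eq_zero_of_natDegree_lt (p := r) (n := k + 1) (by omega)
    · exact ⟨h, ⟨natDegree_le_pred hh h0, mul_one h⟩,
        fun r ⟨_, hr⟩ => by simpa using hr⟩
    · rw [truncMulMod_eq_of_dvd_sub (b := X ^ (k + 2) + X ^ (k + 1)) (c := X ^ (k + 1)) hp
        (by simp) (by rw [hpn]; compute_degree!) ⟨1, by ring⟩ (by simp)]
      simp
  · refine existsUnique_truncMulMod_eq_of_parityCheck
      (leval (0 : ZMod 2)).toAddMonoidHom hp (by omega) (by simp) (fun r _ => by simp)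
      (fun h hh h0 => ?_) ?_ hh
    · simpa using existsUnique_mul_X_sub_C_eq hh h0
    · rw [truncMulMod_eq_of_dvd_sub (b := X ^ (k + 2) + X + 1) (c := X + 1) hp
        ⟨1, by grind⟩ (by rw [hpn]; compute_degree!) ⟨1, by ring⟩ (by compute_degree!)]
      simp
  · rw [X_add_one_eq_X_sub_C_one]
    refine existsUnique_truncMulMod_eq_of_parityCheck
      (leval (1 : ZMod 2)).toAddMonoidHom hp (by omega) (natDegree_X_sub_C_le 1)
      (fun r _ => by simp) (fun h hh h0 => ?_) ?_ hh
    · exact existsUnique_mul_X_sub_C_eq hh h0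
    · rw [← X_add_one_eq_X_sub_C_one, truncMulMod_eq_of_dvd_sub (b := X ^ (k + 1) + X + 1)
        (c := X ^ (k + 1) + X + 1) hp ⟨1, by grind⟩ (by rw [hpn]; compute_degree!) (by simp)
        (by compute_degree!)]
      simp only [LinearMap.toAddMonoidHom_coe, leval_apply, eval_add, eval_pow, eval_X, one_pow,
        eval_one]
      decide

theorem stmt12_general (m : ℕ) (hm : 2 ≤ m)
    (p : Polynomial (ZMod 2)) (hpdef : p = X ^ (m + 1) + X + 1) :
    (∀ g ∈ ({0, 1, X, X + 1} : Set (Polynomial (ZMod 2))),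
      ∀ g' ∈ ({0, 1, X, X + 1} : Set (Polynomial (ZMod 2))), g ≠ g' →
        ∀ h : Polynomial (ZMod 2), h.natDegree ≤ m →
          ∃! f : Polynomial (ZMod 2),
            f.natDegree ≤ m ∧ (f * g) %ₘ p - (f * g') %ₘ p = h)
    ∧
    (∀ g ∈ ({0, 1, X, X + 1} : Set (Polynomial (ZMod 2))),
      ∀ g' ∈ ({0, 1, X, X + 1} : Set (Polynomial (ZMod 2))), g ≠ g' →
        ∀ h : Polynomial (ZMod 2), h.natDegree ≤ m - 1 →
          ∃! f : Polynomial (ZMod 2),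
            (f.natDegree ≤ m - 2 ∨
              ∃ r : Polynomial (ZMod 2), r.natDegree ≤ m - 2 ∧
                f = X ^ m + X ^ (m - 1) + r) ∧
            ((f * g) %ₘ p) %ₘ X ^ m - ((f * g') %ₘ p) %ₘ X ^ m = h) := by
  obtain ⟨k, rfl⟩ : ∃ k, m = k + 2 := ⟨m - 2, by omega⟩
  subst hpdef
  simp only [← sub_modByMonic, ← mul_sub, add_tsub_cancel_right]
  refine ⟨fun g hg g' hg' hne h hh => ?_, fun g hg g' hg' hne h hh => ?_⟩
  · exact existsUnique_mul_modByMonic_eq (by monicity!) (by compute_degree!)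
      (isCoprime_X_pow_add_X_add_one (sub_eq_one_or_X_or_X_add_one hg hg' hne) _) hh
  · exact existsUnique_truncMulMod_X_pow_add_X_add_one_eq k
      (sub_eq_one_or_X_or_X_add_one hg hg' hne) hh

/-- Theorem 1 of the paper. Work in F = GF(2^{m+1}) =
GF(2)[x]/(x^{m+1}+x+1), elements represented by polynomials of degree ≤ m
(reduction is `%ₘ p`). (i) The multiplication table with rows f ∈ F and columns
g ∈ {0,1,x,x+1} is a difference matrix D(2^{m+1}, 4, 2^{m+1}): for distinct
columns every element of F occurs exactly once among the differences.
(ii) Restricting rows to R ∪ (x^m + x^{m-1} + R), where R is the set of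
polynomials of degree ≤ m−2, and truncating entries to degree < m (i.e. `%ₘ X^m`,
the truncation projection φ into GF(2^m)), gives a difference matrix
D(2^m, 4, 2^m): every polynomial of degree ≤ m−1 occurs exactly once. -/
theorem stmt12 (m : ℕ) (hm : 2 ≤ m)
    (p : Polynomial (ZMod 2)) (hpdef : p = X ^ (m + 1) + X + 1) (hp : Irreducible p) :
    (∀ g ∈ ({0, 1, X, X + 1} : Set (Polynomial (ZMod 2))),
      ∀ g' ∈ ({0, 1, X, X + 1} : Set (Polynomial (ZMod 2))), g ≠ g' →
        ∀ h : Polynomial (ZMod 2), h.natDegree ≤ m →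
          ∃! f : Polynomial (ZMod 2),
            f.natDegree ≤ m ∧ (f * g) %ₘ p - (f * g') %ₘ p = h)
    ∧
    (∀ g ∈ ({0, 1, X, X + 1} : Set (Polynomial (ZMod 2))),
      ∀ g' ∈ ({0, 1, X, X + 1} : Set (Polynomial (ZMod 2))), g ≠ g' →
        ∀ h : Polynomial (ZMod 2), h.natDegree ≤ m - 1 →
          ∃! f : Polynomial (ZMod 2),
            (f.natDegree ≤ m - 2 ∨
              ∃ r : Polynomial (ZMod 2), r.natDegree ≤ m - 2 ∧
                f = X ^ m + X ^ (m - 1) + r) ∧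
            ((f * g) %ₘ p) %ₘ X ^ m - ((f * g') %ₘ p) %ₘ X ^ m = h) :=
  stmt12_general m hm p hpdef
end

section
/- For j = 1, 2 let D_j be a difference matrix D(b_j, c_j, s_j) over the group G_j of order s_j, partitioned as D_j = [D_{j0}, D_{j1}] where D_{10} and D_{20} both have c₀ columns (1 ≤ c₀ ≤ min(c₁, c₂)). Define D₀ as the b₁b₂ × c₀ matrix over G₁ × G₂ whose ((i−1)b₂+j, k) entry is (α_{i,k}, β_{j,k}), where α, β are entries of D₁, D₂. Then: (i) D₀ is a difference matrix D(b₁b₂, c₀, s₁s₂) over G₁ × G₂; (ii) the matrix D₁₁* whose ((i−1)b₂+j)-th row is the i-th row of D₁₁ is a difference matrix D(b₁b₂, c₁−c₀, s₁), and similarly D₂₁* (with ((i−1)b₂+j)-th row equal to the j-th row of D₂₁) is a D(b₁b₂, c₂−c₀, s₂); (iii) the augmented matrix [σ₁(D₀), D₁₁*] is a difference matrix D(b₁b₂, c₁, s₁), where σ₁ takes the first component of each entry, and analogously [σ₂(D₀), D₂₁*] is a D(b₁b₂, c₂, s₂). -/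
/-!
When rows are indexed by pairs, the rows on which two columns of `D₀` differ by `(g₁, g₂)`
form the product of the corresponding row sets of `D₁` and `D₂`, so the counts multiply;
repeating every row of a difference matrix equally often scales all counts by the same factor.
Everything else is selection of columns.
-/

/-- A difference matrix over a finite abelian group. -/
def IsDM {I J G : Type*} [Fintype I] [AddCommGroup G] [Fintype G] [DecidableEq G]
    (D : I → J → G) : Prop :=
  ∀ j k : J, j ≠ k → ∀ g : G,
    (Finset.univ.filter (fun i => D i j - D i k = g)).card
      = Fintype.card I / Fintype.card G

namespace IsDM

open Finset

variable {I I₂ J G : Type*} [Fintype I] [Fintype I₂] [AddCommGroup G] [Fintype G]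
  [DecidableEq G]

/-- `IsDM` counts with truncating division; two distinct columns make it exact. -/
lemma card_dvd {D : I → J → G} (h : IsDM D) {j k : J} (hjk : j ≠ k) :
    Fintype.card G ∣ Fintype.card I := by
  have hfibers := card_eq_sum_card_fiberwise (f := fun i => D i j - D i k)
    (s := univ) (t := univ) (fun _ _ => mem_univ _)
  simp only [h j k hjk, sum_const, smul_eq_mul, card_univ] at hfibers
  exact ⟨_, hfibers⟩

lemma comp_right {J' : Type*} {D : I → J → G} (h : IsDM D) {f : J' → J}
    (hf : Function.Injective f) : IsDM (fun i j' => D i (f j')) :=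
  fun j k hjk g => h (f j) (f k) (hf.ne hjk) g

lemma comp_equiv_left {D : I → J → G} (h : IsDM D) (e : I₂ ≃ I) :
    IsDM (fun i j => D (e i) j) := by
  intro j k hjk g
  rw [Fintype.card_congr e, ← h j k hjk g]
  exact card_equiv e (by simp)

lemma fst {D : I → J → G} (h : IsDM D) : IsDM (fun (p : I × I₂) j => D p.1 j) := by
  intro j k hjk g
  rw [← univ_product_univ, filter_product_left (fun i => D i j - D i k = g), card_product,
    h j k hjk g, card_univ, Fintype.card_prod, Nat.div_mul_right_comm (h.card_dvd hjk)]

lemma snd {D : I₂ → J → G} (h : IsDM D) : IsDM (fun (p : I × I₂) j => D p.2 j) :=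
  h.fst.comp_equiv_left (Equiv.prodComm I I₂)

lemma prod {G₂ : Type*} [AddCommGroup G₂] [Fintype G₂] [DecidableEq G₂]
    {D₁ : I → J → G} {D₂ : I₂ → J → G₂} (h₁ : IsDM D₁) (h₂ : IsDM D₂) :
    IsDM (fun (p : I × I₂) j => (D₁ p.1 j, D₂ p.2 j)) := by
  intro j k hjk g
  have hsplit : univ.filter (fun p : I × I₂ => (D₁ p.1 j, D₂ p.2 j) - (D₁ p.1 k, D₂ p.2 k) = g)
      = univ.filter (fun i => D₁ i j - D₁ i k = g.1)
        ×ˢ univ.filter (fun i => D₂ i j - D₂ i k = g.2) := by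
    rw [← filter_product, univ_product_univ]
    simp only [Prod.ext_iff, Prod.fst_sub, Prod.snd_sub]
  rw [hsplit, card_product, h₁ j k hjk g.1, h₂ j k hjk g.2,
    Nat.div_mul_div_comm (h₁.card_dvd hjk) (h₂.card_dvd hjk),
    Fintype.card_prod, Fintype.card_prod]

end IsDM

theorem stmt15_general {G₁ G₂ : Type*} [AddCommGroup G₁] [AddCommGroup G₂]
    [Fintype G₁] [Fintype G₂] [DecidableEq G₁] [DecidableEq G₂]
    {b₁ b₂ c₀ d₁ d₂ : ℕ}
    (D₁ : Fin b₁ → (Fin c₀ ⊕ Fin d₁) → G₁) (hD₁ : IsDM D₁)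
    (D₂ : Fin b₂ → (Fin c₀ ⊕ Fin d₂) → G₂) (hD₂ : IsDM D₂) :
    IsDM (fun (p : Fin b₁ × Fin b₂) (k : Fin c₀) =>
      ((D₁ p.1 (Sum.inl k), D₂ p.2 (Sum.inl k)) : G₁ × G₂))
    ∧
    IsDM (fun (p : Fin b₁ × Fin b₂) (k : Fin d₁) => D₁ p.1 (Sum.inr k))
    ∧
    IsDM (fun (p : Fin b₁ × Fin b₂) (k : Fin d₂) => D₂ p.2 (Sum.inr k))
    ∧
    IsDM (fun (p : Fin b₁ × Fin b₂) (k : Fin c₀ ⊕ Fin d₁) => D₁ p.1 k)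
    ∧
    IsDM (fun (p : Fin b₁ × Fin b₂) (k : Fin c₀ ⊕ Fin d₂) => D₂ p.2 k) :=
  ⟨(hD₁.comp_right Sum.inl_injective).prod (hD₂.comp_right Sum.inl_injective),
    (hD₁.comp_right Sum.inr_injective).fst, (hD₂.comp_right Sum.inr_injective).snd,
    hD₁.fst, hD₂.snd⟩

/-- Lemma 7 of the paper. Let D_j = [D_{j0}, D_{j1}] be a
difference matrix D(b_j, c₀ + d_j, s_j) over G_j (j = 1, 2), with the first c₀
columns indexed by `Sum.inl`. Then: (i) the b₁b₂ × c₀ matrix D₀ over G₁ × G₂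
with ((i,j),k) entry (D₁ i (inl k), D₂ j (inl k)) is a difference matrix
D(b₁b₂, c₀, s₁s₂); (ii) the matrices D₁₁*, D₂₁* obtained by repeating the rows of
D₁₁ (resp. D₂₁) are difference matrices D(b₁b₂, d₁, s₁) and D(b₁b₂, d₂, s₂);
(iii) the augmented matrices [σ₁(D₀), D₁₁*] and [σ₂(D₀), D₂₁*] are difference
matrices D(b₁b₂, c₀ + d₁, s₁) and D(b₁b₂, c₀ + d₂, s₂). -/
theorem stmt15 {G₁ G₂ : Type*} [AddCommGroup G₁] [AddCommGroup G₂]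
    [Fintype G₁] [Fintype G₂] [DecidableEq G₁] [DecidableEq G₂]
    {b₁ b₂ c₀ d₁ d₂ : ℕ} (hc₀ : 1 ≤ c₀)
    (D₁ : Fin b₁ → (Fin c₀ ⊕ Fin d₁) → G₁) (hD₁ : IsDM D₁)
    (D₂ : Fin b₂ → (Fin c₀ ⊕ Fin d₂) → G₂) (hD₂ : IsDM D₂) :
    IsDM (fun (p : Fin b₁ × Fin b₂) (k : Fin c₀) =>
      ((D₁ p.1 (Sum.inl k), D₂ p.2 (Sum.inl k)) : G₁ × G₂))
    ∧
    IsDM (fun (p : Fin b₁ × Fin b₂) (k : Fin d₁) => D₁ p.1 (Sum.inr k))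
    ∧
    IsDM (fun (p : Fin b₁ × Fin b₂) (k : Fin d₂) => D₂ p.2 (Sum.inr k))
    ∧
    IsDM (fun (p : Fin b₁ × Fin b₂) (k : Fin c₀ ⊕ Fin d₁) => D₁ p.1 k)
    ∧
    IsDM (fun (p : Fin b₁ × Fin b₂) (k : Fin c₀ ⊕ Fin d₂) => D₂ p.2 k) :=
  stmt15_general D₁ hD₁ D₂ hD₂
end
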